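/- Let z, z̃ ∈ ℂ with |z| = 1, Re(z) ≠ 0, Im(z) ≠ 0, z̃ = z + Δz, and let η ≤ |Re(z)·Im(z)|. Write q = Im(z)/Re(z) and q̃ = Im(z̃)/Re(z̃), and assume |Δz| < η. Then q̃ = q(1 + δq) with |δq| ≤ 2|Δz| / (η − |Δz|). -/

import Mathlib

/-!
Since `Im z̃ Re z - Re z̃ Im z = Im (conj z * Δz)`, the relative error is
`δq = Im (conj z * Δz) / (Im z * Re z̃)`. As `|z| = 1`, the numerator is at most `|Δz|` in absolute
value, while `Im z * Re z̃ = Re z Im z + Im z Re Δz` is at least `η - |Δz|` in absolute value.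
-/

open ComplexConjugate

theorem div_eq_div_mul_one_add_div {K : Type*} [Field K] {a b c d : K}
    (ha : a ≠ 0) (hb : b ≠ 0) (hd : d ≠ 0) :
    c / d = a / b * (1 + (c * b - d * a) / (a * d)) := by
  field_simp
  ring

namespace Complex

theorem abs_im_conj_mul_le (z w : ℂ) : |(conj z * w).im| ≤ ‖z‖ * ‖w‖ := by
  simpa only [norm_mul, norm_conj] using abs_im_le_norm (conj z * w)

theorem im_conj_mul_eq (z w : ℂ) : (conj z * w).im = (z + w).im * z.re - (z + w).re * z.im := by
  simp only [mul_im, conj_re, conj_im, add_re, add_im]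
  ring

theorem abs_re_mul_im_sub_norm_le {z : ℂ} (hz : ‖z‖ ≤ 1) (w : ℂ) :
    |z.re * z.im| - ‖w‖ ≤ |z.im * (z + w).re| := by
  have him_w : |z.im * w.re| ≤ ‖w‖ :=
    calc |z.im * w.re| = |z.im| * |w.re| := abs_mul _ _
      _ ≤ 1 * ‖w‖ := mul_le_mul ((abs_im_le_norm z).trans hz) (abs_re_le_norm w)
          (abs_nonneg _) zero_le_one
      _ = ‖w‖ := one_mul _
  calc |z.re * z.im| - ‖w‖ ≤ |z.re * z.im| - |z.im * w.re| := sub_le_sub_left him_w _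
    _ ≤ |z.re * z.im + z.im * w.re| := abs_sub_abs_le_abs_add _ _
    _ = |z.im * (z + w).re| := by rw [add_re]; ring_nf

end Complex

theorem stmt_11_general (z zt Δz : ℂ) (η : ℝ)
    (hz : ‖z‖ = 1)
    (hzt : zt = z + Δz)
    (hη : η ≤ |z.re * z.im|)
    (hΔ : ‖Δz‖ < η) :
    ∃ δq : ℝ, zt.im / zt.re = (z.im / z.re) * (1 + δq) ∧
      |δq| ≤ 2 * ‖Δz‖ / (η - ‖Δz‖) := by
  subst hzt
  have hgap : 0 < η - ‖Δz‖ := sub_pos.2 hΔ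
  have hden : η - ‖Δz‖ ≤ |z.im * (z + Δz).re| :=
    (sub_le_sub_right hη _).trans (Complex.abs_re_mul_im_sub_norm_le hz.le Δz)
  have hre : z.re ≠ 0 :=
    left_ne_zero_of_mul (abs_pos.1 ((norm_nonneg Δz).trans_lt hΔ |>.trans_le hη))
  obtain ⟨him, hre_t⟩ := mul_ne_zero_iff.1 (abs_pos.1 (hgap.trans_le hden))
  refine ⟨_, div_eq_div_mul_one_add_div him hre hre_t, ?_⟩
  have hnum : |(conj z * Δz).im| ≤ ‖Δz‖ := by
    simpa only [hz, one_mul] using Complex.abs_im_conj_mul_le z Δz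
  rw [← Complex.im_conj_mul_eq, abs_div]
  calc |(conj z * Δz).im| / |z.im * (z + Δz).re| ≤ ‖Δz‖ / (η - ‖Δz‖) :=
        div_le_div₀ (norm_nonneg _) hnum hgap hden
    _ ≤ 2 * ‖Δz‖ / (η - ‖Δz‖) := by gcongr; linarith [norm_nonneg Δz]

/-- Let `z, z̃ ∈ ℂ` with `|z| = 1`, `Re z ≠ 0`, `Im z ≠ 0`, `z̃ = z + Δz`, and let
`η ≤ |Re(z)·Im(z)|` with `|Δz| < η`. Writing `q = Im z / Re z` and
`q̃ = Im z̃ / Re z̃`, we have `q̃ = q (1 + δq)` with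
`|δq| ≤ 2 |Δz| / (η − |Δz|)`. -/
theorem stmt_11 (z zt Δz : ℂ) (η : ℝ)
    (hz : ‖z‖ = 1) (hre : z.re ≠ 0) (him : z.im ≠ 0)
    (hzt : zt = z + Δz)
    (hη : η ≤ |z.re * z.im|)
    (hΔ : ‖Δz‖ < η) :
    ∃ δq : ℝ, zt.im / zt.re = (z.im / z.re) * (1 + δq) ∧
      |δq| ≤ 2 * ‖Δz‖ / (η - ‖Δz‖) :=
  stmt_11_general z zt Δz η hz hzt hη hΔ
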